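/- Let M(k) denote the maximum number of blocks in a maximal intersecting family of k-sets. If F is a closed intersecting family CIF(k,t) with b blocks and b^⊤ transversals, then for every k ≥ t+1 one has M(k) ≥ b + b^⊤·M(k−t). -/
import Mathlib


open Finset

variable {α : Type*} {β : Type*}

/-- `C` is a blocking set of the family `F`: it meets every block of `F`. -/
def IsBlocking (F : Set (Finset α)) (C : Finset α) : Prop :=
  ∀ B ∈ F, ∃ x ∈ B, x ∈ C

/-- The transversal number `τ(F)`: the minimum size of a (finite) blocking set. -/
noncomputable def tau (F : Set (Finset α)) : ℕ :=
  sInf {n | ∃ C : Finset α, C.card = n ∧ IsBlocking F C}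

/-- The family `F^⊤` of transversals, i.e. minimum-size blocking sets of `F`. -/
noncomputable def transversals (F : Set (Finset α)) : Set (Finset α) :=
  {C | IsBlocking F C ∧ C.card = tau F}

/-- A family is intersecting if any two of its blocks meet. -/
def FamIntersecting (F : Set (Finset α)) : Prop :=
  ∀ A ∈ F, ∀ B ∈ F, ∃ x ∈ A, x ∈ B

/-- A family is `k`-uniform if all its blocks have size `k`. -/
def FamUniform (F : Set (Finset α)) (k : ℕ) : Prop :=
  ∀ B ∈ F, B.card = k

/-- `F` has a finite blocking set (τ(F) < ∞). -/
def HasBlocking (F : Set (Finset α)) : Prop :=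
  ∃ C : Finset α, IsBlocking F C

/-- Maximal intersecting family of `k`-sets: uniform, τ < ∞ and `F = F^⊤`. -/
noncomputable def MIF (F : Set (Finset α)) (k : ℕ) : Prop :=
  FamUniform F k ∧ HasBlocking F ∧ F = transversals F

/-- Closed intersecting family `CIF(k,t)`: a `k`-uniform intersecting family with
`τ(F) = t ≤ k - 1` and `F = (F ∪ F^⊤)^⊤`. -/
noncomputable def CIF (F : Set (Finset α)) (k t : ℕ) : Prop :=
  FamUniform F k ∧ FamIntersecting F ∧ tau F = t ∧ t ≤ k - 1 ∧
    F = transversals (F ∪ transversals F)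

/-- The point set of a family. -/
def pts (F : Set (Finset α)) : Set α := ⋃ B ∈ F, (B : Set α)

/-- `G ⊛ H`: all unions `A ∪ B` with `A ∈ G`, `B ∈ H` (for point-disjoint families
these are disjoint unions). -/
def star [DecidableEq α] (G H : Set (Finset α)) : Set (Finset α) :=
  {C | ∃ A ∈ G, ∃ B ∈ H, C = A ∪ B}

/-- `M k`: the maximum number of blocks in a maximal intersecting family of `k`-sets. -/
noncomputable def M (k : ℕ) : ℕ :=
  sSup {n : ℕ | ∃ F : Set (Finset ℕ), MIF F k ∧ F.ncard = n}

/- ==================== auxiliary lemmas ==================== -/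


lemma tau_le_card {F : Set (Finset α)} {C : Finset α} (h : IsBlocking F C) :
    tau F ≤ C.card := Nat.sInf_le ⟨C, rfl, h⟩

lemma exists_transversal {F : Set (Finset α)} (h : HasBlocking F) :
    (transversals F).Nonempty := by
  obtain ⟨C, hC⟩ := h
  have hne : {n | ∃ C : Finset α, C.card = n ∧ IsBlocking F C}.Nonempty := ⟨C.card, C, rfl, hC⟩
  obtain ⟨D, hD1, hD2⟩ := Nat.sInf_mem hne
  exact ⟨D, hD2, hD1⟩

lemma ncard_biUnion_le {γ : Type*} (B : Finset α) (f : α → Set γ) :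
    (⋃ x ∈ B, f x).ncard ≤ ∑ x ∈ B, (f x).ncard := by
  classical
  induction B using Finset.induction with
  | empty => simp
  | @insert a s ha ih =>
    rw [Finset.sum_insert ha]
    have h1 : (⋃ x ∈ insert a s, f x) = f a ∪ ⋃ x ∈ s, f x := by
      simp [Set.biUnion_insert]
    rw [h1]
    exact le_trans (Set.ncard_union_le _ _) (by omega)

lemma transversal_subset_pts [DecidableEq α] {F : Set (Finset α)} {C : Finset α}
    (hC : C ∈ transversals F) {x : α} (hx : x ∈ C) : x ∈ pts F := by
  by_contra hxp
  have hblock : IsBlocking F (C.erase x) := by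
    intro B hB
    obtain ⟨y, hyB, hyC⟩ := hC.1 B hB
    refine ⟨y, hyB, Finset.mem_erase.2 ⟨?_, hyC⟩⟩
    rintro rfl
    exact hxp (Set.mem_biUnion hB hyB)
  have := tau_le_card hblock
  rw [Finset.card_erase_of_mem hx] at this
  have hpos : 1 ≤ C.card := Finset.card_pos.2 ⟨x, hx⟩
  have htau := hC.2
  omega

/-- minimal blocking sets of size ≤ s -/
def MinB (G : Set (Finset α)) (s : ℕ) : Set (Finset α) :=
  {C | IsBlocking G C ∧ C.card ≤ s ∧ ∀ D ⊆ C, IsBlocking G D → D = C}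

lemma transversals_subset_MinB (G : Set (Finset α)) :
    transversals G ⊆ MinB G (tau G) := by
  rintro C ⟨hbl, hcard⟩
  refine ⟨hbl, hcard.le, fun D hD hDbl => ?_⟩
  have h1 : tau G ≤ D.card := tau_le_card hDbl
  exact Finset.eq_of_subset_of_card_le hD (by omega)

lemma MinB_empty (s : ℕ) : MinB (∅ : Set (Finset α)) s = {∅} := by
  ext C
  constructor
  · rintro ⟨hbl, hcard, hmin⟩
    have := hmin ∅ (Finset.empty_subset C) (by intro B hB; exact absurd hB (Set.notMem_empty B))
    simp [← this]
  · rintro rfl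
    exact ⟨by intro B hB; exact absurd hB (Set.notMem_empty B), by simp,
      fun D hD _ => Finset.subset_empty.1 hD⟩

lemma MinB_finite_card [DecidableEq α] (kb : ℕ) (hkb : 1 ≤ kb) :
    ∀ s : ℕ, ∀ G : Set (Finset α), (∀ B ∈ G, B.card ≤ kb) →
      (MinB G s).Finite ∧ (MinB G s).ncard ≤ kb ^ s := by
  intro s
  induction s with
  | zero =>
    intro G hG
    have hsub : MinB G 0 ⊆ {∅} := by
      rintro C ⟨-, hcard, -⟩
      simp [Finset.card_eq_zero.1 (Nat.le_zero.1 hcard)]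
    constructor
    · exact (Set.finite_singleton _).subset hsub
    · calc (MinB G 0).ncard ≤ ({∅} : Set (Finset α)).ncard :=
            Set.ncard_le_ncard hsub (Set.finite_singleton _)
        _ ≤ 1 := by simp
        _ ≤ kb ^ 0 := by simp
  | succ s ih =>
    intro G hG
    rcases Set.eq_empty_or_nonempty G with rfl | ⟨B₀, hB₀⟩
    · rw [MinB_empty]
      constructor
      · exact Set.finite_singleton _
      · simpa using Nat.one_le_pow _ _ hkb
    · -- main case
      have key : MinB G (s+1) ⊆ ⋃ x ∈ B₀, (insert x) '' (MinB {B ∈ G | x ∉ B} s) := by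
        rintro C ⟨hbl, hcard, hmin⟩
        obtain ⟨x, hxB₀, hxC⟩ := hbl B₀ hB₀
        refine Set.mem_biUnion hxB₀ ⟨C.erase x, ⟨?_, ?_, ?_⟩, Finset.insert_erase hxC⟩
        · rintro B ⟨hBG, hxB⟩
          obtain ⟨y, hyB, hyC⟩ := hbl B hBG
          exact ⟨y, hyB, Finset.mem_erase.2 ⟨fun h => hxB (h ▸ hyB), hyC⟩⟩
        · rw [Finset.card_erase_of_mem hxC]; omega
        · intro D hD hDbl
          have hxD : x ∉ D := fun h => (Finset.mem_erase.1 (hD h)).1 rfl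
          have hins : IsBlocking G (insert x D) := by
            intro B hBG
            by_cases hxB : x ∈ B
            · exact ⟨x, hxB, Finset.mem_insert_self x D⟩
            · obtain ⟨y, hyB, hyD⟩ := hDbl B ⟨hBG, hxB⟩
              exact ⟨y, hyB, Finset.mem_insert_of_mem hyD⟩
          have hsub : insert x D ⊆ C := by
            intro y hy
            rcases Finset.mem_insert.1 hy with rfl | hyD
            · exact hxC
            · exact Finset.mem_of_mem_erase (hD hyD)
          have := hmin _ hsub hins
          rw [← this, Finset.erase_insert hxD]
      have hfinsub : ∀ x ∈ B₀, ((insert x) '' (MinB {B ∈ G | x ∉ B} s)).Finite := by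
        intro x hx
        exact ((ih {B ∈ G | x ∉ B} (fun B hB => hG B hB.1)).1).image _
      have hUfin : (⋃ x ∈ B₀, (insert x) '' (MinB {B ∈ G | x ∉ B} s)).Finite :=
        Set.Finite.biUnion (B₀ : Set α).toFinite (fun x hx => hfinsub x hx)
      refine ⟨hUfin.subset key, ?_⟩
      calc (MinB G (s+1)).ncard
          ≤ (⋃ x ∈ B₀, (insert x) '' (MinB {B ∈ G | x ∉ B} s)).ncard :=
            Set.ncard_le_ncard key hUfin
        _ ≤ ∑ x ∈ B₀, ((insert x) '' (MinB {B ∈ G | x ∉ B} s)).ncard :=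
            ncard_biUnion_le B₀ _
        _ ≤ ∑ _x ∈ B₀, kb ^ s := by
            refine Finset.sum_le_sum fun x hx => ?_
            calc ((insert x) '' (MinB {B ∈ G | x ∉ B} s)).ncard
                ≤ (MinB {B ∈ G | x ∉ B} s).ncard := Set.ncard_image_le
                  ((ih {B ∈ G | x ∉ B} (fun B hB => hG B hB.1)).1)
              _ ≤ kb ^ s := (ih {B ∈ G | x ∉ B} (fun B hB => hG B hB.1)).2
        _ ≤ kb ^ (s+1) := by
            rw [Finset.sum_const, smul_eq_mul, pow_succ, mul_comm]
            exact Nat.mul_le_mul_left _ (hG B₀ hB₀)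

/- ==================== MIF lemmas ==================== -/

lemma MIF_nonempty {F : Set (Finset α)} {k : ℕ} (h : MIF F k) : F.Nonempty := by
  rw [h.2.2]; exact exists_transversal h.2.1

lemma MIF_tau_eq {F : Set (Finset α)} {k : ℕ} (h : MIF F k) : tau F = k := by
  obtain ⟨C, hC⟩ := MIF_nonempty h
  have h1 : C.card = k := h.1 C hC
  have h2 : C ∈ transversals F := h.2.2 ▸ hC
  rw [← h2.2, h1]

lemma MIF_blocks {F : Set (Finset α)} {k : ℕ} (h : MIF F k) {C : Finset α} (hC : C ∈ F) :
    IsBlocking F C := (h.2.2 ▸ hC).1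

lemma MIF_finite [DecidableEq α] {F : Set (Finset α)} {k : ℕ} (hk : 1 ≤ k) (h : MIF F k) :
    F.Finite ∧ F.ncard ≤ k ^ k := by
  have hsub : F ⊆ MinB F k := by
    have := transversals_subset_MinB F
    rw [← h.2.2, MIF_tau_eq h] at this
    exact this
  have hbd : ∀ B ∈ F, B.card ≤ k := fun B hB => (h.1 B hB).le
  obtain ⟨hfin, hcard⟩ := MinB_finite_card k hk k F hbd
  exact ⟨hfin.subset hsub, le_trans (Set.ncard_le_ncard hsub hfin) hcard⟩

lemma Mset_bddAbove {k : ℕ} (hk : 1 ≤ k) :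
    BddAbove {n : ℕ | ∃ F : Set (Finset ℕ), MIF F k ∧ F.ncard = n} := by
  refine ⟨k ^ k, ?_⟩
  rintro n ⟨F, hF, rfl⟩
  exact (MIF_finite hk hF).2

/- ==================== the complete design example ==================== -/

lemma intersecting_of_large {m : ℕ} (hm : 1 ≤ m) {A B : Finset ℕ}
    (hA : A ⊆ Finset.range (2*m-1)) (hB : B ⊆ Finset.range (2*m-1))
    (hAc : A.card = m) (hBc : B.card = m) : ∃ x ∈ A, x ∈ B := by
  by_contra h
  push_neg at h
  have hdisj : Disjoint A B := Finset.disjoint_left.2 h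
  have hU : A ∪ B ⊆ Finset.range (2*m-1) := Finset.union_subset hA hB
  have := Finset.card_le_card hU
  rw [Finset.card_union_of_disjoint hdisj, Finset.card_range, hAc, hBc] at this
  omega

lemma designMIF {m : ℕ} (hm : 1 ≤ m) :
    MIF {A : Finset ℕ | A ⊆ Finset.range (2*m-1) ∧ A.card = m} m := by
  set K := {A : Finset ℕ | A ⊆ Finset.range (2*m-1) ∧ A.card = m} with hK
  have hmem : ∀ A ∈ K, IsBlocking K A := by
    rintro A ⟨hA, hAc⟩ B ⟨hB, hBc⟩
    obtain ⟨x, hx1, hx2⟩ := intersecting_of_large hm hB hA hBc hAc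
    exact ⟨x, hx1, hx2⟩
  have hKne : K.Nonempty := by
    obtain ⟨A, hA, hAc⟩ := Finset.exists_subset_card_eq (show m ≤ (Finset.range (2*m-1)).card by
      rw [Finset.card_range]; omega)
    exact ⟨A, hA, hAc⟩
  -- lower bound for blocking sets
  have hlow : ∀ C : Finset ℕ, IsBlocking K C → m ≤ (C ∩ Finset.range (2*m-1)).card := by
    intro C hC
    by_contra hlt
    push_neg at hlt
    have hcard : m ≤ ((Finset.range (2*m-1)) \ (C ∩ Finset.range (2*m-1))).card := by
      have := Finset.card_sdiff_add_card_eq_card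
        (Finset.inter_subset_right : C ∩ Finset.range (2*m-1) ⊆ Finset.range (2*m-1))
      rw [Finset.card_range] at this
      omega
    obtain ⟨B, hB, hBc⟩ := Finset.exists_subset_card_eq hcard
    have hBK : B ∈ K := ⟨hB.trans (Finset.sdiff_subset), hBc⟩
    obtain ⟨x, hxB, hxC⟩ := hC B hBK
    have hx := hB hxB
    rw [Finset.mem_sdiff] at hx
    exact hx.2 (Finset.mem_inter.2 ⟨hxC, hx.1⟩)
  have htau : tau K = m := by
    apply le_antisymm
    · obtain ⟨A, hA⟩ := hKne
      exact le_trans (tau_le_card (hmem A hA)) (le_of_eq hA.2)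
    · obtain ⟨C, hCc, hCb⟩ := Nat.sInf_mem (⟨m, hKne.some, hKne.some_mem.2, hmem _ hKne.some_mem⟩ :
        {n | ∃ C : Finset ℕ, C.card = n ∧ IsBlocking K C}.Nonempty)
      calc m ≤ (C ∩ Finset.range (2*m-1)).card := hlow C hCb
        _ ≤ C.card := Finset.card_le_card Finset.inter_subset_left
        _ = tau K := hCc
  refine ⟨fun A hA => hA.2, ⟨hKne.some, hmem _ hKne.some_mem⟩, ?_⟩
  ext C
  constructor
  · rintro hC
    refine ⟨hmem C hC, ?_⟩
    rw [htau, hC.2]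
  · rintro ⟨hbl, hcard⟩
    rw [htau] at hcard
    have h1 := hlow C hbl
    have h2 : C ∩ Finset.range (2*m-1) = C :=
      Finset.eq_of_subset_of_card_le Finset.inter_subset_left (by omega)
    refine ⟨?_, hcard⟩
    rw [← h2]; exact Finset.inter_subset_right

lemma M_attained {m : ℕ} (hm : 1 ≤ m) :
    ∃ H : Set (Finset ℕ), MIF H m ∧ H.ncard = M m := by
  have hne : {n : ℕ | ∃ F : Set (Finset ℕ), MIF F m ∧ F.ncard = n}.Nonempty :=
    ⟨_, _, designMIF hm, rfl⟩
  obtain ⟨H, hH, hHc⟩ := Nat.sSup_mem hne (Mset_bddAbove hm)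
  exact ⟨H, hH, hHc⟩

/- ==================== shifting a family ==================== -/

def shiftFam (N : ℕ) (G : Set (Finset ℕ)) : Set (Finset ℕ) :=
  (fun B => Finset.image (· + N) B) '' G

lemma add_inj (N : ℕ) : Function.Injective (· + N : ℕ → ℕ) := add_left_injective N

def pullN (N : ℕ) (C : Finset ℕ) : Finset ℕ := (C.filter (N ≤ ·)).image (· - N)

lemma pull_card (N : ℕ) (C : Finset ℕ) : (pullN N C).card ≤ C.card :=
  le_trans Finset.card_image_le (Finset.card_filter_le _ _)

lemma pull_blocking {N : ℕ} {G : Set (Finset ℕ)} {C : Finset ℕ}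
    (h : IsBlocking (shiftFam N G) C) : IsBlocking G (pullN N C) := by
  intro B hB
  obtain ⟨x, hx, hxC⟩ := h (B.image (· + N)) ⟨B, hB, rfl⟩
  obtain ⟨b, hbB, rfl⟩ := Finset.mem_image.1 hx
  refine ⟨b, hbB, ?_⟩
  apply Finset.mem_image.2
  exact ⟨b + N, Finset.mem_filter.2 ⟨hxC, by show N ≤ b + N; omega⟩, by show b + N - N = b; omega⟩

lemma push_blocking {N : ℕ} {G : Set (Finset ℕ)} {C : Finset ℕ}
    (h : IsBlocking G C) : IsBlocking (shiftFam N G) (C.image (· + N)) := by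
  rintro B' ⟨B, hB, rfl⟩
  obtain ⟨x, hxB, hxC⟩ := h B hB
  exact ⟨x + N, Finset.mem_image_of_mem _ hxB, Finset.mem_image_of_mem _ hxC⟩

lemma tau_shift {N : ℕ} {G : Set (Finset ℕ)} (hG : HasBlocking G) :
    tau (shiftFam N G) = tau G := by
  apply le_antisymm
  · obtain ⟨C, hCc, hCb⟩ := Nat.sInf_mem (show {n | ∃ C : Finset ℕ, C.card = n ∧
        IsBlocking G C}.Nonempty from ⟨hG.choose.card, hG.choose, rfl, hG.choose_spec⟩)
    refine le_trans (tau_le_card (push_blocking hCb)) ?_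
    rw [Finset.card_image_of_injective _ (add_inj N), hCc]
    exact le_rfl
  · obtain ⟨C, hCc, hCb⟩ := Nat.sInf_mem (show {n | ∃ C : Finset ℕ, C.card = n ∧
        IsBlocking (shiftFam N G) C}.Nonempty from
        ⟨(hG.choose.image (· + N)).card, hG.choose.image (· + N), rfl,
          push_blocking hG.choose_spec⟩)
    calc tau G ≤ (pullN N C).card := tau_le_card (pull_blocking hCb)
      _ ≤ C.card := pull_card N C
      _ = tau (shiftFam N G) := hCc

lemma transversals_shift {N : ℕ} {G : Set (Finset ℕ)} (hG : HasBlocking G) :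
    transversals (shiftFam N G) = (fun B => Finset.image (· + N) B) '' transversals G := by
  ext C
  constructor
  · rintro ⟨hbl, hcard⟩
    rw [tau_shift hG] at hcard
    have h1 : IsBlocking G (pullN N C) := pull_blocking hbl
    have h2 : tau G ≤ (pullN N C).card := tau_le_card h1
    have h3 : (pullN N C).card ≤ C.card := pull_card N C
    have h4 : (pullN N C).card = C.card := by omega
    -- all elements of C are ≥ N
    have h5 : C.filter (N ≤ ·) = C := by
      apply Finset.eq_of_subset_of_card_le (Finset.filter_subset _ _)
      calc C.card = (pullN N C).card := h4.symm
        _ ≤ (C.filter (N ≤ ·)).card := Finset.card_image_le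
    refine ⟨pullN N C, ⟨h1, by omega⟩, ?_⟩
    -- image (·+N) (pullN N C) = C
    show Finset.image (· + N) (pullN N C) = C
    have hge : ∀ y ∈ C, N ≤ y := fun y hy =>
      (Finset.mem_filter.1 (by rw [h5]; exact hy)).2
    rw [pullN, h5, Finset.image_image]
    ext x
    simp only [Finset.mem_image, Function.comp_apply]
    constructor
    · rintro ⟨y, hyC, rfl⟩
      have := hge y hyC
      have hxy : y - N + N = y := by omega
      rw [hxy]; exact hyC
    · intro hx
      exact ⟨x, hx, by have := hge x hx; omega⟩
  · rintro ⟨D, ⟨hbl, hcard⟩, rfl⟩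
    refine ⟨push_blocking hbl, ?_⟩
    rw [Finset.card_image_of_injective _ (add_inj N), tau_shift hG, hcard]

lemma MIF_shift {N m : ℕ} {G : Set (Finset ℕ)} (h : MIF G m) : MIF (shiftFam N G) m := by
  obtain ⟨hu, hb, he⟩ := h
  refine ⟨?_, ?_, ?_⟩
  · rintro B' ⟨B, hB, rfl⟩
    rw [Finset.card_image_of_injective _ (add_inj N)]
    exact hu B hB
  · exact ⟨hb.choose.image (· + N), push_blocking hb.choose_spec⟩
  · rw [transversals_shift hb, ← he]
    rfl

lemma ncard_shift (N : ℕ) (G : Set (Finset ℕ)) : (shiftFam N G).ncard = G.ncard :=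
  Set.ncard_image_of_injective G (Finset.image_injective (add_inj N))

lemma pts_shift {N : ℕ} {G : Set (Finset ℕ)} {x : ℕ} (hx : x ∈ pts (shiftFam N G)) : N ≤ x := by
  obtain ⟨s, hs, hxs⟩ := Set.mem_iUnion₂.1 hx
  obtain ⟨B, hB, rfl⟩ := hs
  simp only [Finset.coe_image, Set.mem_image] at hxs
  obtain ⟨b, -, rfl⟩ := hxs
  omega

/- ==================== auxiliary: tau of empty family ==================== -/

lemma tau_empty : tau (∅ : Set (Finset ℕ)) = 0 :=
  Nat.eq_zero_of_le_zero (Nat.sInf_le ⟨∅, by simp, fun B hB => absurd hB (Set.notMem_empty B)⟩)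

lemma transversals_empty : transversals (∅ : Set (Finset ℕ)) = {∅} := by
  ext C
  simp only [transversals, Set.mem_setOf_eq, tau_empty, Finset.card_eq_zero,
    Set.mem_singleton_iff]
  constructor
  · rintro ⟨-, h⟩; exact h
  · rintro rfl; exact ⟨fun B hB => absurd hB (Set.notMem_empty B), rfl⟩

theorem stmt_6 (k t b bT : ℕ) (hk : t + 1 ≤ k) (F : Set (Finset ℕ))
    (hF : CIF F k t) (hb : F.ncard = b) (hbT : (transversals F).ncard = bT) :
    b + bT * M (k - t) ≤ M k := by
  classical
  obtain ⟨hu, hint, htau, htk, hclosed⟩ := hF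
  rcases Nat.eq_zero_or_pos t with rfl | ht
  · -- degenerate case t = 0 : F must be empty
    have hFempty : F = ∅ := by
      rcases Set.eq_empty_or_nonempty F with h | ⟨B, hB⟩
      · exact h
      · exfalso
        have hne : {n | ∃ C : Finset ℕ, C.card = n ∧ IsBlocking F C}.Nonempty :=
          ⟨B.card, B, rfl, fun A hA => hint A hA B hB⟩
        obtain ⟨C, hC0, hCb⟩ := Nat.sInf_mem hne
        have hc : C.card = 0 := by rw [hC0]; exact htau
        rw [Finset.card_eq_zero] at hc
        subst hc
        obtain ⟨x, -, hx⟩ := hCb B hB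
        exact absurd hx (Finset.notMem_empty x)
    rw [hFempty, Set.ncard_empty] at hb
    rw [hFempty, transversals_empty, Set.ncard_singleton] at hbT
    subst hb; subst hbT
    simp
  · -- main case t ≥ 1
    have hk1 : 1 ≤ k := by omega
    set m := k - t with hm
    have hm1 : 1 ≤ m := by omega
    have hktm : k = t + m := by omega
    have hFne : F.Nonempty := by
      rcases Set.eq_empty_or_nonempty F with rfl | h
      · rw [tau_empty] at htau; omega
      · exact h
    set T := transversals F with hT
    have hHasB : HasBlocking F := ⟨hFne.some, fun B hB => hint B hB _ hFne.some_mem⟩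
    have hTne : T.Nonempty := exists_transversal hHasB
    have hTcard : ∀ A ∈ T, A.card = t := fun A hA => by rw [hA.2, htau]
    have hTblocks : ∀ A ∈ T, IsBlocking F A := fun A hA => hA.1
    -- F = transversals (F ∪ T)
    have hclosed' : F = transversals (F ∪ T) := hclosed
    -- tau (F ∪ T) = k
    have htauFT : tau (F ∪ T) = k := by
      obtain ⟨B, hB⟩ := hFne
      have hBt : B ∈ transversals (F ∪ T) := by rw [← hclosed']; exact hB
      rw [← hBt.2]
      exact hu B hB
    -- finiteness of F and T
    have hTfin : T.Finite := by
      have hsub : T ⊆ MinB F t := by rw [hT, ← htau]; exact transversals_subset_MinB F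
      exact ((MinB_finite_card k hk1 t F (fun B hB => (hu B hB).le)).1).subset hsub
    have hbdFT : ∀ B ∈ F ∪ T, B.card ≤ k := by
      rintro B (hB | hB)
      · exact (hu B hB).le
      · rw [hTcard B hB]; omega
    have hFfin : F.Finite := by
      rw [hclosed']
      have hsub := transversals_subset_MinB (F ∪ T)
      rw [htauFT] at hsub
      exact ((MinB_finite_card k hk1 k (F ∪ T) hbdFT).1).subset hsub
    -- the point set of F ∪ T and a fresh offset N
    have hptsfin : (pts (F ∪ T)).Finite :=
      Set.Finite.biUnion (hFfin.union hTfin) (fun B _ => B.finite_toSet)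
    set Sf := hptsfin.toFinset with hSf
    set N := (Sf.sup id) + 1 with hN
    have hSfN : ∀ x ∈ Sf, x < N := fun x hx =>
      lt_of_le_of_lt (Finset.le_sup (f := id) hx) (by omega)
    -- a maximum MIF of (k-t)-sets, shifted beyond N
    obtain ⟨H₀, hH₀, hH₀c⟩ := M_attained hm1
    set H := shiftFam N H₀ with hH
    have hHmif : MIF H m := MIF_shift hH₀
    have hHc : H.ncard = M m := by rw [hH, ncard_shift, hH₀c]
    have hHfin : H.Finite := (MIF_finite hm1 hHmif).1
    have hHavoid : ∀ B ∈ H, ∀ x ∈ B, x ∉ Sf := by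
      intro B hB x hx hxS
      have h1 : N ≤ x := pts_shift (Set.mem_biUnion hB hx)
      have h2 := hSfN x hxS
      omega
    have hFin : ∀ B ∈ F, ∀ x ∈ B, x ∈ Sf := fun B hB x hx =>
      (hptsfin.mem_toFinset).2 (Set.mem_biUnion (Set.mem_union_left _ hB) hx)
    have hTin : ∀ A ∈ T, ∀ x ∈ A, x ∈ Sf := fun A hA x hx =>
      (hptsfin.mem_toFinset).2 (Set.mem_biUnion (Set.mem_union_right _ hA) hx)
    have htauH : tau H = m := MIF_tau_eq hHmif
    -- the new family X
    set X := F ∪ star T H with hX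
    have hXuni : FamUniform X k := by
      rintro B (hB | ⟨A, hA, B', hB', rfl⟩)
      · exact hu B hB
      · have hdisj : Disjoint A B' := by
          rw [Finset.disjoint_left]
          intro x hxA hxB
          exact hHavoid B' hB' x hxB (hTin A hA x hxA)
        rw [Finset.card_union_of_disjoint hdisj, hTcard A hA, hHmif.1 B' hB']
        omega
    have hXblocks : ∀ C ∈ X, IsBlocking X C := by
      rintro C (hC | ⟨A, hA, C', hC', rfl⟩) B (hB | ⟨A₂, hA₂, B', hB', rfl⟩)
      · exact hint B hB C hC
      · obtain ⟨x, hxC, hxA⟩ := hTblocks A₂ hA₂ C hC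
        exact ⟨x, Finset.mem_union_left _ hxA, hxC⟩
      · obtain ⟨x, hxB, hxA⟩ := hTblocks A hA B hB
        exact ⟨x, hxB, Finset.mem_union_left _ hxA⟩
      · obtain ⟨x, hxB', hxC'⟩ := MIF_blocks hHmif hC' B' hB'
        exact ⟨x, Finset.mem_union_right _ hxB', Finset.mem_union_right _ hxC'⟩
    have hXhasB : HasBlocking X :=
      ⟨hFne.some, hXblocks _ (Set.mem_union_left _ hFne.some_mem)⟩
    -- key classification of blocking sets of X
    have hkey : ∀ C : Finset ℕ, IsBlocking X C → k ≤ C.card ∧ (C.card = k → C ∈ X) := by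
      intro C hC
      set CF := C ∩ Sf with hCF
      set CH := C \ Sf with hCH
      have hcards : CF.card + CH.card = C.card := Finset.card_inter_add_card_sdiff C Sf
      have hCblF : IsBlocking F CF := by
        intro B hB
        obtain ⟨x, hxB, hxC⟩ := hC B (Set.mem_union_left _ hB)
        exact ⟨x, hxB, Finset.mem_inter.2 ⟨hxC, hFin B hB x hxB⟩⟩
      by_cases hcase : ∀ A ∈ T, ∃ x ∈ A, x ∈ CF
      · -- CF blocks F ∪ T, hence has ≥ k elements
        have hblFT : IsBlocking (F ∪ T) CF := by
          rintro B (hB | hB)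
          · exact hCblF B hB
          · exact hcase B hB
        have h1 : k ≤ CF.card := by rw [← htauFT]; exact tau_le_card hblFT
        have hle : CF.card ≤ C.card := Finset.card_le_card Finset.inter_subset_left
        refine ⟨by omega, fun hCk => ?_⟩
        have hCFeq : CF = C :=
          Finset.eq_of_subset_of_card_le Finset.inter_subset_left (by omega)
        have hmemT : C ∈ transversals (F ∪ T) := by
          refine ⟨by rw [← hCFeq]; exact hblFT, by rw [hCk, htauFT]⟩
        exact Set.mem_union_left _ (by rw [hclosed']; exact hmemT)
      · -- some A₀ ∈ T is missed; then CH blocks H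
        push_neg at hcase
        obtain ⟨A₀, hA₀, hA₀C⟩ := hcase
        have hA₀disj : ∀ x ∈ A₀, x ∉ C := fun x hx hxC =>
          hA₀C x hx (Finset.mem_inter.2 ⟨hxC, hTin A₀ hA₀ x hx⟩)
        have hCblH : IsBlocking H CH := by
          intro B hB
          obtain ⟨x, hxAB, hxC⟩ := hC (A₀ ∪ B) (Set.mem_union_right _ ⟨A₀, hA₀, B, hB, rfl⟩)
          rcases Finset.mem_union.1 hxAB with hxA | hxB
          · exact absurd hxC (hA₀disj x hxA)
          · exact ⟨x, hxB, Finset.mem_sdiff.2 ⟨hxC, fun hS => hHavoid B hB x hxB hS⟩⟩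
        have h2 : t ≤ CF.card := by rw [← htau]; exact tau_le_card hCblF
        have h3 : m ≤ CH.card := by rw [← htauH]; exact tau_le_card hCblH
        refine ⟨by omega, fun hCk => ?_⟩
        have hCFt : CF.card = t := by omega
        have hCHm : CH.card = m := by omega
        have hCFT : CF ∈ T := ⟨hCblF, by rw [hCFt, htau]⟩
        have hCHH : CH ∈ H := by
          rw [hHmif.2.2]; exact ⟨hCblH, by rw [hCHm, htauH]⟩
        have hCsplit : CF ∪ CH = C := by
          ext x
          simp only [hCF, hCH, Finset.mem_union, Finset.mem_inter, Finset.mem_sdiff]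
          tauto
        exact Set.mem_union_right _ ⟨CF, hCFT, CH, hCHH, hCsplit.symm⟩
    -- tau X = k
    have htauX : tau X = k := by
      apply le_antisymm
      · obtain ⟨B, hB⟩ := hFne
        exact le_trans (tau_le_card (hXblocks B (Set.mem_union_left _ hB))) (le_of_eq (hu B hB))
      · obtain ⟨C, hCc, hCb⟩ := Nat.sInf_mem (show {n | ∃ C : Finset ℕ, C.card = n ∧
            IsBlocking X C}.Nonempty from
            ⟨hXhasB.choose.card, hXhasB.choose, rfl, hXhasB.choose_spec⟩)
        calc k ≤ C.card := (hkey C hCb).1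
          _ = tau X := hCc
    -- X is an MIF(k)
    have hXeq : X = transversals X := by
      ext C
      constructor
      · intro hC
        exact ⟨hXblocks C hC, by rw [htauX]; exact hXuni C hC⟩
      · rintro ⟨hbl, hcard⟩
        exact (hkey C hbl).2 (by rw [hcard, htauX])
    have hXmif : MIF X k := ⟨hXuni, hXhasB, hXeq⟩
    -- counting
    have hstar_eq : star T H = (fun p : Finset ℕ × Finset ℕ => p.1 ∪ p.2) '' (T ×ˢ H) := by
      ext C
      constructor
      · rintro ⟨A, hA, B, hB, rfl⟩; exact ⟨(A, B), ⟨hA, hB⟩, rfl⟩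
      · rintro ⟨⟨A, B⟩, ⟨hA, hB⟩, rfl⟩; exact ⟨A, hA, B, hB, rfl⟩
    have hstarfin : (star T H).Finite := by
      rw [hstar_eq]; exact (hTfin.prod hHfin).image _
    have hsplit : ∀ A B : Finset ℕ, A ∈ T → B ∈ H →
        (A ∪ B) ∩ Sf = A ∧ (A ∪ B) \ Sf = B := by
      intro A B hA hB
      constructor
      · ext x
        simp only [Finset.mem_inter, Finset.mem_union]
        constructor
        · rintro ⟨hx1 | hx1, hx2⟩
          · exact hx1
          · exact absurd hx2 (hHavoid B hB x hx1)
        · intro hx; exact ⟨Or.inl hx, hTin A hA x hx⟩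
      · ext x
        simp only [Finset.mem_sdiff, Finset.mem_union]
        constructor
        · rintro ⟨hx1 | hx1, hx2⟩
          · exact absurd (hTin A hA x hx1) hx2
          · exact hx1
        · intro hx; exact ⟨Or.inr hx, hHavoid B hB x hx⟩
    have hinj : Set.InjOn (fun p : Finset ℕ × Finset ℕ => p.1 ∪ p.2) (T ×ˢ H) := by
      rintro ⟨A, B⟩ hAB ⟨A', B'⟩ hAB' hEq
      simp only [Set.mem_prod] at hAB hAB'
      obtain ⟨h1, h2⟩ := hsplit A B hAB.1 hAB.2
      obtain ⟨h1', h2'⟩ := hsplit A' B' hAB'.1 hAB'.2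
      simp only at hEq
      have hA : A = A' := by rw [← h1, ← h1', hEq]
      have hB : B = B' := by rw [← h2, ← h2', hEq]
      simp [hA, hB]
    have hprodcard : (T ×ˢ H : Set (Finset ℕ × Finset ℕ)).ncard = bT * M m := by
      have hcoe : (T ×ˢ H : Set (Finset ℕ × Finset ℕ)) =
          ↑(hTfin.toFinset ×ˢ hHfin.toFinset) := by
        rw [Finset.coe_product, hTfin.coe_toFinset, hHfin.coe_toFinset]
      rw [hcoe, Set.ncard_coe_finset, Finset.card_product]
      have hTc : hTfin.toFinset.card = bT := by
        rw [← Set.ncard_coe_finset, hTfin.coe_toFinset]; exact hbT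
      have hHc' : hHfin.toFinset.card = M m := by
        rw [← Set.ncard_coe_finset, hHfin.coe_toFinset]; exact hHc
      rw [hTc, hHc']
    have hstarcard : (star T H).ncard = bT * M m := by
      rw [hstar_eq, Set.ncard_image_of_injOn hinj, hprodcard]
    have hdisjFS : Disjoint F (star T H) := by
      rw [Set.disjoint_left]
      rintro B hBF ⟨A, hA, B', hB', rfl⟩
      have hB'ne : B'.Nonempty := Finset.card_pos.1 (by rw [hHmif.1 B' hB']; omega)
      obtain ⟨x, hx⟩ := hB'ne
      exact hHavoid B' hB' x hx (hFin _ hBF x (Finset.mem_union_right _ hx))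
    have hXcard : X.ncard = b + bT * M m := by
      rw [hX, Set.ncard_union_eq hdisjFS hFfin hstarfin, hb, hstarcard]
    have hmem : X.ncard ∈ {n : ℕ | ∃ F : Set (Finset ℕ), MIF F k ∧ F.ncard = n} :=
      ⟨X, hXmif, rfl⟩
    have hfin := le_csSup (Mset_bddAbove hk1) hmem
    rw [hXcard] at hfin
    exact hfin
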